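/- arXiv:2508.10961 — 2 statements merged into one kernel-verified Lean document; each statement's English description precedes it below -/
import Mathlib

section
/- For a positive integer n, the integer 2(2n−1) divides (3n²−3n+1)(3n²−3n+2) if and only if n = 1 or n = 3. (Equivalently, the required magic sum N(N+1)/(2(2n−1)) of a normal order-n magic hexagon, where N = 3n²−3n+1, is an integer only for n = 1 and n = 3.) -/
/-! With `t = 2n - 1` the two factors become `(3t² + 1) / 4` and `(3t² + 5) / 4`, so sixteen times
their product is `5` modulo `t`. Hence `2n - 1` divides `5`, which leaves only `n ≤ 3`, and `n = 2`
fails since `6 ∤ 56`. -/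

/-- The order-`n` hexagonal board: triples `(a,b,c)` of integers with
`a + b + c = 0` and `|a|, |b|, |c| ≤ n - 1`. -/
noncomputable def hexBoard (n : ℕ) : Finset (ℤ × ℤ × ℤ) :=
  ((Finset.Icc (-(n:ℤ) + 1) ((n:ℤ) - 1)) ×ˢ (Finset.Icc (-(n:ℤ) + 1) ((n:ℤ) - 1)) ×ˢ
      (Finset.Icc (-(n:ℤ) + 1) ((n:ℤ) - 1))).filter
    (fun p => p.1 + p.2.1 + p.2.2 = 0)

/-- The `k`-th coordinate of a cell. -/
def hexCoord : Fin 3 → ℤ × ℤ × ℤ → ℤ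
  | 0, p => p.1
  | 1, p => p.2.1
  | 2, p => p.2.2

/-- The line of the order-`n` board consisting of the cells whose `k`-th
coordinate equals `v`. -/
noncomputable def hexLine (n : ℕ) (k : Fin 3) (v : ℤ) : Finset (ℤ × ℤ × ℤ) :=
  (hexBoard n).filter (fun p => hexCoord k p = v)

/-- `x` is a magic hexagon of order `n` with magic sum `M`: the sum of `x` over
every line of the order-`n` board equals `M`. -/
def IsMagicHexagon (n : ℕ) (x : ℤ × ℤ × ℤ → ℤ) (M : ℤ) : Prop :=
  ∀ k : Fin 3, ∀ v : ℤ, |v| ≤ (n:ℤ) - 1 → ∑ p ∈ hexLine n k v, x p = M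

theorem two_mul_sub_one_dvd_five_of_dvd (m : ℤ)
    (h : 2 * m - 1 ∣ (3 * m ^ 2 - 3 * m + 1) * (3 * m ^ 2 - 3 * m + 2)) : 2 * m - 1 ∣ 5 := by
  have five_eq : (5 : ℤ) = 16 * ((3 * m ^ 2 - 3 * m + 1) * (3 * m ^ 2 - 3 * m + 2))
      - (2 * m - 1) * (9 * (2 * m - 1) ^ 3 + 18 * (2 * m - 1)) := by ring
  rw [five_eq]
  exact dvd_sub (h.mul_left 16) (dvd_mul_right _ _)

/-- For a positive integer `n`, `2(2n−1)` divides `(3n²−3n+1)(3n²−3n+2)` if and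
only if `n = 1` or `n = 3`. -/
theorem magic_sum_integrality (n : ℕ) (hn : 0 < n) :
    (2 * (2 * (n:ℤ) - 1)) ∣ (3 * (n:ℤ)^2 - 3 * (n:ℤ) + 1) * (3 * (n:ℤ)^2 - 3 * (n:ℤ) + 2)
      ↔ n = 1 ∨ n = 3 := by
  constructor
  · intro h
    have hdvd_five := two_mul_sub_one_dvd_five_of_dvd n ((dvd_mul_left _ 2).trans h)
    have hn3 : n ≤ 3 := by
      have := Int.le_of_dvd (by norm_num) hdvd_five
      omega
    interval_cases n
    · exact .inl rfl
    · norm_num at h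
    · exact .inr rfl
  · rintro (rfl | rfl) <;> norm_num
end

section
/- There exists a magic hexagon of order 6 with magic sum 546 whose entries are exactly the integers 21 through 111, each used once; that is, there is a bijection x from H_6 (which has 91 cells) onto {21, 22, …, 111} such that the sum of x over each of the 33 lines of H_6 equals 546. -/
/-! The arrangement below was found by computer search. Its entries sum to
`21 + ⋯ + 111 = 6006`, and the eleven lines of one direction partition the board, so the magic
sum is forced to be `6006 / 11 = 546`. All remaining checks are finite computations. -/

theorem Finset.bijOn_of_image_eq_of_card_eq {α β : Type*} [DecidableEq β] {f : α → β}
    {s : Finset α} {t : Finset β} (himage : s.image f = t) (hcard : t.card = s.card) :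
    Set.BijOn f s t := by
  have hinj : Set.InjOn f s := Finset.card_image_iff.mp (himage ▸ hcard)
  simpa [← himage] using hinj.bijOn_image

theorem isMagicHexagon_iff_forall_mem_Icc {n : ℕ} {x : ℤ × ℤ × ℤ → ℤ} {M : ℤ} :
    IsMagicHexagon n x M ↔
      ∀ k : Fin 3, ∀ v ∈ Finset.Icc (1 - (n : ℤ)) (n - 1), ∑ p ∈ hexLine n k v, x p = M := by
  simp only [IsMagicHexagon, Finset.mem_Icc, abs_le, neg_sub]

/-- Row `i` of `rows` lists, in increasing order of `b`, the entries of the cells `(a, b, c)` with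
`a = i - (n - 1)`; out-of-range positions read as `0`. -/
def hexOfRows (n : ℕ) (rows : List (List ℤ)) (p : ℤ × ℤ × ℤ) : ℤ :=
  (rows.getD (p.1 + n - 1).toNat []).getD (p.2.1 + n - 1 + min p.1 0).toNat 0

def magicRowsOrderSix : List (List ℤ) :=
  [          [ 65, 101, 104, 109,  89,  78],
           [ 98,  46,  93,  73,  81,  72,  83],
         [107,  74,  47,  37,  53,  44,  84, 100],
       [ 88,  91,  36,  32,  35,  39,  45,  70, 110],
     [106,  79,  43,  29,  22,  24,  23,  54,  67,  99],
   [ 82,  60,  58,  31,  21,  34,  30,  50,  48,  56,  76],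
     [ 95,  68,  42,  33,  25,  27,  26,  51,  71, 108],
       [ 97,  90,  41,  38,  28,  40,  57,  61,  94],
         [103,  66,  59,  62,  49,  52,  63,  92],
           [105,  69,  77,  55,  75,  85,  80],
             [ 64,  87, 102,  86, 111,  96]]

/-- There is a magic hexagon of order `6` with magic sum `546` whose entries
are exactly the integers `21` through `111`. -/
theorem magic_hexagon_order_six :
    ∃ x : ℤ × ℤ × ℤ → ℤ,
      Set.BijOn x ↑(hexBoard 6) (Set.Icc (21 : ℤ) 111) ∧ IsMagicHexagon 6 x 546 := by
  refine ⟨hexOfRows 6 magicRowsOrderSix, ?_, isMagicHexagon_iff_forall_mem_Icc.mpr (by decide)⟩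
  rw [← Finset.coe_Icc]
  exact Finset.bijOn_of_image_eq_of_card_eq (by decide) (by decide)
end
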